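/- An element r of the field ℂ of complex numbers is arithmetically fixed if and only if r is rational; that is, ℂ̃ equals the image of ℚ in ℂ. -/

import Mathlib

/-- A map `f` is *arithmetic* on a subset `A` of a field `K`. -/
def ArithmeticMap {K : Type*} [Field K] (A : Set K) (f : K → K) : Prop :=
  ((1 : K) ∈ A → f 1 = 1) ∧
  (∀ a b : K, a ∈ A → b ∈ A → a + b ∈ A → f (a + b) = f a + f b) ∧
  (∀ a b : K, a ∈ A → b ∈ A → a * b ∈ A → f (a * b) = f a * f b)

/-- An element `r` of a field `K` is *arithmetically fixed* if there is a finite set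
`A ⊆ K` with `r ∈ A` such that every arithmetic map `f : A → K` fixes `r`. -/
def ArithFixed {K : Type*} [Field K] (r : K) : Prop :=
  ∃ A : Finset K, r ∈ A ∧ ∀ f : K → K, ArithmeticMap (↑A : Set K) f → f r = r

/-!
A ring endomorphism is arithmetic on every set, so an arithmetically fixed element is fixed by
every ring endomorphism. In an uncountable algebraically closed field `K` of characteristic zero
every irrational `r` is moved by an automorphism: on a countable subring, send `r` to another
root of its minimal polynomial (or to `r + 1` if `r` is transcendental), and extend to `K` by
matching transcendence bases, which both have cardinality `#K`. Conversely, a rational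
`q = m / d` is fixed using `A = {q} ∪ {-N, …, N}`: additivity forces `f` to fix the integers
in `A`, and then `f d * f q = f m` forces `f q = q`.
-/

open Cardinal IntermediateField Polynomial

universe u

namespace ArithmeticMap

variable {K : Type*} [Field K] {A : Set K} {f : K → K}

theorem map_zero (hf : ArithmeticMap A f) (h0 : (0 : K) ∈ A) : f 0 = 0 := by
  have h := hf.2.1 0 0 h0 h0 (by rwa [add_zero])
  rw [add_zero] at h
  exact left_eq_add.mp h

theorem map_natCast (hf : ArithmeticMap A f) {n : ℕ} (hA : ∀ k ≤ n, (k : K) ∈ A) :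
    ∀ k ≤ n, f k = k
  | 0, _ => by simpa using hf.map_zero (by simpa using hA 0 n.zero_le)
  | k + 1, hk => by
    have h1 : (1 : K) ∈ A := by simpa using hA 1 (by omega)
    rw [Nat.cast_succ, hf.2.1 _ _ (hA k (by omega)) h1 (by exact_mod_cast hA _ hk),
      hf.map_natCast hA k (by omega), hf.1 h1]

theorem map_intCast (hf : ArithmeticMap A f) {n : ℕ}
    (hA : ∀ k : ℤ, k.natAbs ≤ n → (k : K) ∈ A) {k : ℤ} (hk : k.natAbs ≤ n) : f k = k := by
  have hAnat : ∀ m ≤ n, (m : K) ∈ A := fun m hm => by exact_mod_cast hA m (by simpa using hm)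
  obtain ⟨m, rfl | rfl⟩ := Int.eq_nat_or_neg k
  · exact_mod_cast hf.map_natCast hAnat m (by simpa using hk)
  · have h0 : (0 : K) ∈ A := by simpa using hAnat 0 n.zero_le
    have h := hf.2.1 (-m : ℤ) m (hA _ hk) (hAnat m (by simpa using hk)) (by simpa using h0)
    rw [hf.map_natCast hAnat m (by simpa using hk)] at h
    push_cast at h ⊢
    rw [neg_add_cancel, hf.map_zero h0] at h
    linear_combination -h

end ArithmeticMap

theorem arithFixed_ratCast {K : Type*} [Field K] [CharZero K] (q : ℚ) : ArithFixed (q : K) := by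
  classical
  set n := max q.num.natAbs q.den
  set A : Finset K := insert (q : K) ((Finset.Icc (-n : ℤ) n).image (↑))
  have hA : ∀ k : ℤ, k.natAbs ≤ n → (k : K) ∈ A := fun k hk =>
    Finset.mem_insert_of_mem (Finset.mem_image_of_mem _ (Finset.mem_Icc.mpr (by omega)))
  have hden : (q.den : ℤ).natAbs ≤ n := by simp [n]
  have hnum : q.num.natAbs ≤ n := le_max_left ..
  have hqA : (q : K) ∈ A := Finset.mem_insert_self ..
  have hdq : (q.den : K) * q = q.num := by
    rw [Rat.cast_def, mul_div_cancel₀ _ (Nat.cast_ne_zero.mpr q.den_nz)]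
  refine ⟨A, hqA, fun f hf => ?_⟩
  have h := hf.2.2 _ _ (by exact_mod_cast hA _ hden) hqA (by rw [hdq]; exact hA _ hnum)
  rw [hdq, hf.map_intCast hA hnum, ← Int.cast_natCast, hf.map_intCast hA hden,
    Int.cast_natCast, ← hdq] at h
  exact (mul_left_cancel₀ (Nat.cast_ne_zero.mpr q.den_nz) h).symm

theorem RingHom.arithmeticMap {K : Type*} [Field K] (σ : K →+* K) (A : Set K) :
    ArithmeticMap A σ :=
  ⟨fun _ => map_one σ, fun a b _ _ _ => map_add σ a b, fun a b _ _ _ => map_mul σ a b⟩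

theorem ArithFixed.ringHom_apply_eq {K : Type*} [Field K] {r : K} (hr : ArithFixed r)
    (σ : K →+* K) : σ r = r :=
  hr.elim fun A hA => hA.2 σ (σ.arithmeticMap A)

theorem IsAlgClosed.exists_ringEquiv_comp_eq {R : Type*} {K L : Type u} [CommRing R] [Countable R]
    [Field K] [Field L] [IsAlgClosed K] [IsAlgClosed L] (hK : ℵ₀ < #K) (hKL : #K = #L)
    (φ : R →+* K) (ψ : R →+* L) (hφ : Function.Injective φ) (hψ : Function.Injective ψ) :
    ∃ σ : K ≃+* L, σ.toRingHom.comp φ = ψ := by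
  let := φ.toAlgebra
  let := ψ.toAlgebra
  have := RingHom.domain_nontrivial φ
  have := (faithfulSMul_iff_algebraMap_injective R K).mpr hφ
  have := (faithfulSMul_iff_algebraMap_injective R L).mpr hψ
  obtain ⟨s, hs⟩ := exists_isTranscendenceBasis R K
  obtain ⟨t, ht⟩ := exists_isTranscendenceBasis R L
  obtain ⟨e⟩ : Nonempty (s ≃ t) := by
    have hs' := cardinal_eq_cardinal_transcendence_basis_of_aleph0_lt _ hs mk_le_aleph0 hK
    have ht' := cardinal_eq_cardinal_transcendence_basis_of_aleph0_lt _ ht mk_le_aleph0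
      (hKL ▸ hK)
    simp only [lift_id] at hs' ht'
    exact Cardinal.eq.1 (by rw [← hs', ← ht', hKL])
  let := isAlgClosure_of_transcendence_basis _ hs
  let := isAlgClosure_of_transcendence_basis _ ht
  let eA := hs.1.aevalEquiv.symm.trans ((MvPolynomial.renameEquiv R e).trans ht.1.aevalEquiv)
  refine ⟨IsAlgClosure.equivOfEquiv K L eA.toRingEquiv, RingHom.ext fun x => ?_⟩
  change IsAlgClosure.equivOfEquiv K L eA.toRingEquiv (algebraMap R K x) = algebraMap R L x
  rw [IsScalarTower.algebraMap_apply R (Algebra.adjoin R (Set.range ((↑) : s → K))) K x,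
    IsAlgClosure.equivOfEquiv_algebraMap, AlgEquiv.coe_ringEquiv, eA.commutes,
    ← IsScalarTower.algebraMap_apply]

namespace IsAlgClosed

variable {K : Type u} [Field K] [IsAlgClosed K] [CharZero K]

theorem exists_ringEquiv_apply_ne_of_isAlgebraic (hK : ℵ₀ < #K) {r : K}
    (halg : IsAlgebraic ℚ r) (hr : r ∉ Set.range ((↑) : ℚ → K)) : ∃ σ : K ≃+* K, σ r ≠ r := by
  have hint := halg.isIntegral
  have hdeg : 2 ≤ (minpoly ℚ r).natDegree :=
    (minpoly.two_le_natDegree_iff hint).mpr (by simpa [RingHom.mem_range] using hr)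
  have hcard := card_algHom_adjoin_integral ℚ (K := K) hint (minpoly.irreducible hint).separable
    (IsAlgClosed.splits _)
  have := Nat.finite_of_card_ne_zero (hcard ▸ (by omega : (minpoly ℚ r).natDegree ≠ 0))
  have := Finite.one_lt_card_iff_nontrivial.mp (hcard ▸ hdeg)
  obtain ⟨τ, hτ⟩ := exists_ne ℚ⟮r⟯.val
  have : Countable ℚ⟮r⟯ := by
    rw [← Cardinal.mk_le_aleph0_iff, ← Cardinal.lift_le_aleph0.{_, 0}]
    exact (lift_cardinalMk_adjoin_le ℚ {r}).trans (by simp)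
  have hτr : τ (AdjoinSimple.gen ℚ r) ≠ r := fun h =>
    hτ (adjoin_algHom_ext ℚ fun x hx => by obtain rfl := Set.mem_singleton_iff.mp hx; exact h)
  obtain ⟨σ, hσ⟩ := exists_ringEquiv_comp_eq hK rfl ℚ⟮r⟯.val.toRingHom τ.toRingHom
    Subtype.val_injective τ.toRingHom.injective
  have hσr : σ r = τ (AdjoinSimple.gen ℚ r) := by simpa using congr($hσ (AdjoinSimple.gen ℚ r))
  exact ⟨σ, hσr ▸ hτr⟩

theorem exists_ringEquiv_apply_eq_add_one_of_transcendental (hK : ℵ₀ < #K) {r : K}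
    (hr : Transcendental ℚ r) : ∃ σ : K ≃+* K, σ r = r + 1 := by
  have : Countable ℚ[X] := Cardinal.mk_le_aleph0_iff.mp (cardinalMk_le_max.trans (by simp))
  have hinj := transcendental_iff_injective.mp hr
  obtain ⟨σ, hσ⟩ := exists_ringEquiv_comp_eq hK rfl (aeval r).toRingHom
    ((aeval r).comp (taylorEquiv (1 : ℚ)).toAlgHom).toRingHom hinj
    (hinj.comp (taylorEquiv (1 : ℚ)).injective)
  refine ⟨σ, ?_⟩
  simpa using congr($hσ X)

theorem exists_ringEquiv_apply_ne (hK : ℵ₀ < #K) {r : K} (hr : r ∉ Set.range ((↑) : ℚ → K)) :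
    ∃ σ : K ≃+* K, σ r ≠ r := by
  by_cases halg : IsAlgebraic ℚ r
  · exact exists_ringEquiv_apply_ne_of_isAlgebraic hK halg hr
  · obtain ⟨σ, hσ⟩ := exists_ringEquiv_apply_eq_add_one_of_transcendental hK halg
    exact ⟨σ, by simp [hσ]⟩

theorem arithFixed_iff_mem_range_ratCast (hK : ℵ₀ < #K) {r : K} :
    ArithFixed r ↔ r ∈ Set.range ((↑) : ℚ → K) := by
  refine ⟨fun h => ?_, fun ⟨q, hq⟩ => hq ▸ arithFixed_ratCast q⟩
  by_contra hr
  obtain ⟨σ, hσ⟩ := exists_ringEquiv_apply_ne hK hr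
  exact hσ (h.ringHom_apply_eq σ.toRingHom)

end IsAlgClosed

/-- A complex number is arithmetically fixed if and only if it is rational. -/
theorem arithFixed_complex_iff_rational :
    {r : ℂ | ArithFixed r} = Set.range ((↑) : ℚ → ℂ) :=
  Set.ext fun _ => IsAlgClosed.arithFixed_iff_mem_range_ratCast
    (by rw [mk_complex]; exact aleph0_lt_continuum)
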